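/- In the group G_2 = ⟨x, y | x y^{-1} x^{-1} y x = y^{-2} x y x^{-1} y^{-1} x y^2⟩, the image of [y,x] in the quotient γ_2(G_2)/γ_3(G_2) satisfies [y,x]^4 = 1; consequently γ_2(G_2)/γ_3(G_2) is a cyclic group of order dividing 4. -/

import Mathlib

/-!
Modulo `γ₃` all commutators are central, so the commutator map is multiplicative in each
argument; as `G₂` is generated by `x` and `y`, `γ₂/γ₃` is generated by the image of the single
commutator `d = ⁅x, y⁆`. In `G₂/γ₃` conjugation by `y` sends `x` to `d x`, which turns the two
sides of the defining relation into `d⁻¹ x` and `d³ x`; hence `d⁴ = 1`.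
-/

namespace Stmt2

abbrev F := FreeGroup (Fin 2)

def x : F := FreeGroup.of 0
def y : F := FreeGroup.of 1

def R : F :=
  x * y⁻¹ * x⁻¹ * y * x * (y⁻¹ * y⁻¹ * x * y * x⁻¹ * y⁻¹ * x * y * y)⁻¹

abbrev G2 := PresentedGroup ({R} : Set F)

def xg : G2 := PresentedGroup.of 0
def yg : G2 := PresentedGroup.of 1

/-- `[y,x] = y⁻¹ x⁻¹ y x` in `G₂`. -/
def c : G2 := yg⁻¹ * xg⁻¹ * yg * xg

/-- `γ₂(G₂) = lowerCentralSeries G₂ 1`, `γ₃(G₂) = lowerCentralSeries G₂ 2`. -/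
abbrev γ₂ : Subgroup G2 := (⊤ : Subgroup G2).lowerCentralSeries 1
abbrev γ₃ : Subgroup G2 := (⊤ : Subgroup G2).lowerCentralSeries 2

instance : (γ₃.subgroupOf γ₂).Normal :=
  Subgroup.Normal.subgroupOf inferInstance _

/-- The quotient `γ₂(G₂)/γ₃(G₂)`. -/
abbrev Q := γ₂ ⧸ (γ₃.subgroupOf γ₂)

end Stmt2

open scoped commutatorElement

section CentralCommutators

variable {H : Type*} [Group H]

theorem commutatorElement_mul_left_of_central (hcen : ∀ a b g : H, Commute ⁅a, b⁆ g)
    (a b c : H) : ⁅a * b, c⁆ = ⁅a, c⁆ * ⁅b, c⁆ := by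
  rw [commutatorElement_mul_left_eq_conj_mul, ← (hcen b c a).eq, mul_inv_cancel_right,
    (hcen b c _).eq]

theorem commutatorElement_inv_left_of_central (hcen : ∀ a b g : H, Commute ⁅a, b⁆ g)
    (a b : H) : ⁅a⁻¹, b⁆ = ⁅a, b⁆⁻¹ := by
  rw [eq_inv_iff_mul_eq_one, ← commutatorElement_mul_left_of_central hcen, inv_mul_cancel,
    commutatorElement_one_left]

theorem commutatorElement_mul_right_of_central (hcen : ∀ a b g : H, Commute ⁅a, b⁆ g)
    (a b c : H) : ⁅a, b * c⁆ = ⁅a, b⁆ * ⁅a, c⁆ := by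
  rw [commutatorElement_mul_right_eq_mul_conj, mul_assoc _ b, ← (hcen a c b).eq, ← mul_assoc,
    mul_inv_cancel_right]

theorem commutatorElement_inv_right_of_central (hcen : ∀ a b g : H, Commute ⁅a, b⁆ g)
    (a b : H) : ⁅a, b⁻¹⁆ = ⁅a, b⁆⁻¹ := by
  rw [eq_inv_iff_mul_eq_one, ← commutatorElement_mul_right_of_central hcen, inv_mul_cancel,
    commutatorElement_one_right]

theorem commutator_le_zpowers_of_closure_pair_eq_top (hcen : ∀ a b g : H, Commute ⁅a, b⁆ g)
    {a b : H} (hab : Subgroup.closure {a, b} = ⊤) : commutator H ≤ Subgroup.zpowers ⁅a, b⁆ := by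
  rw [commutator_def, Subgroup.commutator_le]
  rintro g - h -
  have hg : g ∈ Subgroup.closure {a, b} := hab ▸ Subgroup.mem_top g
  have hh : h ∈ Subgroup.closure {a, b} := hab ▸ Subgroup.mem_top h
  induction hg, hh using Subgroup.closure_induction₂ with
  | mem u v hu hv =>
    rcases hu with rfl | rfl <;> rcases hv with rfl | rfl
    · rw [commutatorElement_self]; exact one_mem _
    · exact Subgroup.mem_zpowers _
    · rw [← inv_mem_iff, commutatorElement_inv]; exact Subgroup.mem_zpowers _
    · rw [commutatorElement_self]; exact one_mem _
  | one_left => rw [commutatorElement_one_left]; exact one_mem _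
  | one_right => rw [commutatorElement_one_right]; exact one_mem _
  | mul_left _ _ _ _ _ _ hu hv =>
    rw [commutatorElement_mul_left_of_central hcen]; exact mul_mem hu hv
  | mul_right _ _ _ _ _ _ hu hv =>
    rw [commutatorElement_mul_right_of_central hcen]; exact mul_mem hu hv
  | inv_left _ _ _ _ hu => rw [commutatorElement_inv_left_of_central hcen]; exact inv_mem hu
  | inv_right _ _ _ _ hu => rw [commutatorElement_inv_right_of_central hcen]; exact inv_mem hu

theorem commutatorElement_pow_four_eq_one_of_relation (hcen : ∀ a b g : H, Commute ⁅a, b⁆ g)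
    {X Y : H} (hrel : X * Y⁻¹ * X⁻¹ * Y * X = Y⁻¹ * Y⁻¹ * X * Y * X⁻¹ * Y⁻¹ * X * Y * Y) :
    ⁅X, Y⁆ ^ 4 = 1 := by
  set d := ⁅X, Y⁆
  have hconj : Y⁻¹ * X * Y = d * X :=
    calc Y⁻¹ * X * Y = X * ⁅X⁻¹, Y⁻¹⁆ := by rw [commutatorElement_def]; group
      _ = d * X := by
        rw [commutatorElement_inv_left_of_central hcen, commutatorElement_inv_right_of_central hcen,
          inv_inv, (hcen X Y X).eq]
  have hd : Y⁻¹ * d * Y = d := by rw [mul_assoc, (hcen X Y Y).eq, inv_mul_cancel_left]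
  have hlhs : X * Y⁻¹ * X⁻¹ * Y * X = d⁻¹ * X := by
    calc X * Y⁻¹ * X⁻¹ * Y * X = X * (Y⁻¹ * X * Y)⁻¹ * X := by group
      _ = d⁻¹ * X := by rw [hconj]; group
  have hrhs : Y⁻¹ * Y⁻¹ * X * Y * X⁻¹ * Y⁻¹ * X * Y * Y = d ^ 3 * X := by
    calc Y⁻¹ * Y⁻¹ * X * Y * X⁻¹ * Y⁻¹ * X * Y * Y
        = Y⁻¹ * ((Y⁻¹ * X * Y) * X⁻¹ * (Y⁻¹ * X * Y)) * Y := by group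
      _ = Y⁻¹ * (d * X * X⁻¹ * (d * X)) * Y := by rw [hconj]
      _ = (Y⁻¹ * d * Y) * (Y⁻¹ * d * Y) * (Y⁻¹ * X * Y) := by group
      _ = d ^ 3 * X := by rw [hd, hconj, ← mul_assoc, pow_three']
  rw [hlhs, hrhs, mul_left_inj, inv_eq_iff_mul_eq_one] at hrel
  rw [pow_succ', hrel]

end CentralCommutators

theorem commute_commutatorElement_quotient_lowerCentralSeries_two {G : Type*} [Group G]
    (a b g : G ⧸ (⊤ : Subgroup G).lowerCentralSeries 2) : Commute ⁅a, b⁆ g := by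
  obtain ⟨a, rfl⟩ := QuotientGroup.mk'_surjective _ a
  obtain ⟨b, rfl⟩ := QuotientGroup.mk'_surjective _ b
  obtain ⟨g, rfl⟩ := QuotientGroup.mk'_surjective _ g
  rw [← commutatorElement_eq_one_iff_commute, ← map_commutatorElement, ← map_commutatorElement,
    QuotientGroup.mk'_apply, QuotientGroup.eq_one_iff]
  exact Subgroup.commutator_mem_commutator
    (Subgroup.commutator_mem_commutator (Subgroup.mem_top a) (Subgroup.mem_top b))
    (Subgroup.mem_top g)

theorem QuotientGroup.map_subtype_injective {G : Type*} [Group G] (H N : Subgroup G) [N.Normal]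
    [(N.subgroupOf H).Normal] :
    Function.Injective (QuotientGroup.map (N.subgroupOf H) N H.subtype fun _ => id) := by
  refine (injective_iff_map_eq_one _).2 fun q hq => ?_
  induction q using QuotientGroup.induction_on with
  | H h => exact (QuotientGroup.eq_one_iff h).2 ((QuotientGroup.eq_one_iff (h : G)).1 hq)

namespace Stmt2

open Subgroup

theorem xg_yg_relation :
    xg * yg⁻¹ * xg⁻¹ * yg * xg = yg⁻¹ * yg⁻¹ * xg * yg * xg⁻¹ * yg⁻¹ * xg * yg * yg := by
  have h := PresentedGroup.mk_eq_mk_of_mul_inv_mem (Set.mem_singleton R)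
  simp only [map_mul, map_inv] at h
  exact h

theorem closure_xg_yg : closure {xg, yg} = ⊤ := by
  rw [← PresentedGroup.closure_range_of]
  congr
  ext
  simp [Fin.exists_fin_two, xg, yg, eq_comm]

theorem c_mem_γ₂ : c ∈ γ₂ := by
  have hc : c = ⁅yg⁻¹, xg⁻¹⁆ := by rw [c, commutatorElement_def, inv_inv, inv_inv]
  rw [hc]
  exact commutator_mem_commutator (mem_top _) (mem_top _)

theorem commutatorElement_mk_xg_yg_pow_four : ⁅(xg : G2 ⧸ γ₃), (yg : G2 ⧸ γ₃)⁆ ^ 4 = 1 :=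
  commutatorElement_pow_four_eq_one_of_relation
    commute_commutatorElement_quotient_lowerCentralSeries_two
    (by simpa only [map_mul, map_inv, QuotientGroup.mk'_apply]
      using congrArg (QuotientGroup.mk' γ₃) xg_yg_relation)

theorem map_γ₂_le_zpowers :
    γ₂.map (QuotientGroup.mk' γ₃) ≤ zpowers ⁅(xg : G2 ⧸ γ₃), (yg : G2 ⧸ γ₃)⁆ := by
  have hsurj := QuotientGroup.mk'_surjective γ₃
  rw [γ₂, top_lowerCentralSeries_one, commutator_def, map_commutator,
    map_top_of_surjective _ hsurj]
  refine commutator_le_zpowers_of_closure_pair_eq_top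
    commute_commutatorElement_quotient_lowerCentralSeries_two ?_
  rw [← Set.image_pair, ← QuotientGroup.coe_mk', ← MonoidHom.map_closure, closure_xg_yg,
    map_top_of_surjective _ hsurj]

theorem pow_four_mem_γ₃ {g : G2} (hg : g ∈ γ₂) : g ^ 4 ∈ γ₃ := by
  obtain ⟨n, hn⟩ := map_γ₂_le_zpowers (mem_map_of_mem _ hg)
  rw [← QuotientGroup.eq_one_iff, QuotientGroup.mk_pow, ← QuotientGroup.mk'_apply, ← hn,
    ← zpow_natCast, ← zpow_mul, mul_comm, zpow_mul, zpow_natCast,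
    commutatorElement_mk_xg_yg_pow_four, one_zpow]

theorem gamma2_mod_gamma3 :
    c ^ 4 ∈ γ₃ ∧ IsCyclic Q ∧ ∀ q : Q, q ^ 4 = 1 := by
  let φ : Q →* G2 ⧸ γ₃ := QuotientGroup.map _ _ γ₂.subtype fun _ => id
  have hφ : φ.range ≤ zpowers ⁅(xg : G2 ⧸ γ₃), (yg : G2 ⧸ γ₃)⁆ := by
    rintro _ ⟨q, rfl⟩
    induction q using QuotientGroup.induction_on with
    | H g => exact map_γ₂_le_zpowers ⟨g, g.2, rfl⟩
  have := isCyclic_of_le hφ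
  refine ⟨pow_four_mem_γ₃ c_mem_γ₂, isCyclic_of_injective φ.rangeRestrict ?_, ?_⟩
  · exact MonoidHom.rangeRestrict_injective_iff.2 (QuotientGroup.map_subtype_injective γ₂ γ₃)
  · intro q
    induction q using QuotientGroup.induction_on with
    | H g => exact (QuotientGroup.eq_one_iff _).2 (pow_four_mem_γ₃ g.2)

end Stmt2
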